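/- arXiv:1307.2429 — 2 statements merged into one kernel-verified Lean document; each statement's English description precedes it below -/
import Mathlib

section
/- Assume there is c > 0 such that Re⟨B₀φ, φ⟩ ≥ c‖φ‖² for all φ ∈ dom(D₀) ∩ dom(A) and Re⟨𝓜*(D₀*ψ) + 𝓝*ψ + A*ψ, ψ⟩ ≥ c‖ψ‖² for all ψ ∈ dom(D₀*) ∩ dom(A*). Then the adjoint B₀* of B₀ satisfies Re⟨B₀* f, f⟩ ≥ c‖f‖² for every f ∈ dom(B₀*); in particular B₀* is injective. -/
open Filter

/-- The operator `B₀` with domain `dom D₀ ⊓ dom A`, `B₀ u = D₀(𝓜 u) + 𝓝 u + A u`. -/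
noncomputable def B0 {K : Type*} [NormedAddCommGroup K] [InnerProductSpace ℂ K]
    (D₀ A : K →ₗ.[ℂ] K) (Mc N : K →L[ℂ] K)
    (hM : ∀ u ∈ D₀.domain, Mc u ∈ D₀.domain) : K →ₗ.[ℂ] K where
  domain := D₀.domain ⊓ A.domain
  toFun :=
    D₀.toFun.comp (LinearMap.codRestrict D₀.domain
        ((Mc : K →ₗ[ℂ] K).comp (D₀.domain ⊓ A.domain).subtype)
        (fun u => hM _ (Submodule.mem_inf.mp u.2).1))
    + (N : K →ₗ[ℂ] K).comp (D₀.domain ⊓ A.domain).subtype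
    + A.toFun.comp (Submodule.inclusion inf_le_right)

/-! Regularise with the adjoint resolvents. For `f ∈ dom B₀*` the vectors `ψ_ε = R_ε* f` lie in
`dom D₀*`, and, since `R_ε` commutes with `A`, also in `dom A*`, with `A* ψ_ε` expressed through
`B₀* f`. The relation `𝓜 D₀ = D₀ 𝓜 + M` yields `𝓜* R_ε* = R_ε* 𝓜* + ε R_ε* M* R_ε*`, which
cancels the `ε⁻¹`-singular terms, so the adjoint positivity at `ψ_ε` becomes
`c‖ψ_ε‖² ≤ Re⟨S_ε, ψ_ε⟩` with `S_ε → B₀* f` as `ε → 0⁺`, the `R_ε*` being contractions that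
converge strongly to the identity. -/

open Topology ContinuousLinearMap
open scoped InnerProductSpace

theorem LinearPMap.injective_of_coercive {𝕜 E : Type*} [RCLike 𝕜] [NormedAddCommGroup E]
    [InnerProductSpace 𝕜 E] (T : E →ₗ.[𝕜] E) {c : ℝ} (hc : 0 < c)
    (hT : ∀ (x : E) (hx : x ∈ T.domain), c * ‖x‖ ^ 2 ≤ RCLike.re ⟪T ⟨x, hx⟩, x⟫_𝕜) :
    Function.Injective (fun x : T.domain => T x) := by
  refine (injective_iff_map_eq_zero T.toFun).2 fun x hx => ?_
  have hle : c * ‖(x : E)‖ ^ 2 ≤ 0 := by simpa [show T x = 0 from hx] using hT x x.2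
  have : ‖(x : E)‖ ^ 2 ≤ 0 := nonpos_of_mul_nonpos_right hle hc
  exact Subtype.ext (by simpa using this)

theorem tendsto_apply_of_tendsto_of_norm_le {α 𝕜 E F : Type*} [NontriviallyNormedField 𝕜]
    [SeminormedAddCommGroup E] [NormedSpace 𝕜 E] [SeminormedAddCommGroup F] [NormedSpace 𝕜 F]
    {l : Filter α} {T : α → E →L[𝕜] F} {T₀ : E →L[𝕜] F} {C : ℝ}
    (hC : ∀ᶠ a in l, ‖T a‖ ≤ C) (hT : ∀ y, Tendsto (fun a => T a y) l (𝓝 (T₀ y)))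
    {x : α → E} {x₀ : E} (hx : Tendsto x l (𝓝 x₀)) :
    Tendsto (fun a => T a (x a)) l (𝓝 (T₀ x₀)) := by
  have h0 : Tendsto (fun a => T a (x a - x₀)) l (𝓝 0) := by
    refine squeeze_zero_norm' ?_
      (by simpa using (tendsto_iff_norm_sub_tendsto_zero.1 hx).const_mul C)
    filter_upwards [hC] with a ha
    exact (T a).le_of_opNorm_le ha _
  simpa using h0.add (hT x₀)

theorem tendsto_apply_add_sub_of_tendsto_id {α 𝕜 E : Type*} [NontriviallyNormedField 𝕜]
    [SeminormedAddCommGroup E] [NormedSpace 𝕜 E] {l : Filter α} {T : α → E →L[𝕜] E} {C : ℝ}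
    (hC : ∀ᶠ a in l, ‖T a‖ ≤ C) (hT : ∀ y, Tendsto (fun a => T a y) l (𝓝 y))
    (P Q : E →L[𝕜] E) (f g : E) :
    Tendsto (fun a => T a (g + Q f - P f) + P (T a f) - T a (Q (T a f))) l (𝓝 g) := by
  have hP : Tendsto (fun a => P (T a f)) l (𝓝 (P f)) := (P.continuous.tendsto f).comp (hT f)
  have hQ : Tendsto (fun a => T a (Q (T a f))) l (𝓝 (Q f)) :=
    tendsto_apply_of_tendsto_of_norm_le (T₀ := .id 𝕜 E) hC hT ((Q.continuous.tendsto f).comp (hT f))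
  convert ((hT (g + Q f - P f)).add hP).sub hQ using 2
  abel

section

variable {K : Type*} [NormedAddCommGroup K] [InnerProductSpace ℂ K]

theorem resolvent_commutator (D₀ : K →ₗ.[ℂ] K) (Mc Mop R : K →L[ℂ] K) {ε : ℝ} (hε : ε ≠ 0)
    (hMdom : ∀ u ∈ D₀.domain, Mc u ∈ D₀.domain)
    (hMcomm : ∀ u : D₀.domain, Mc (D₀ u) = D₀ ⟨Mc u, hMdom u u.2⟩ + Mop u)
    (hdom : ∀ x, R x ∈ D₀.domain) (hval : ∀ x, D₀ ⟨R x, hdom x⟩ = ε⁻¹ • (x - R x))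
    (hinv : ∀ u : D₀.domain, R ((u : K) + ε • D₀ u) = u) (x : K) :
    R (Mc x) = Mc (R x) + ε • R (Mop (R x)) := by
  set u : D₀.domain := ⟨R x, hdom x⟩
  have hx : (u : K) + ε • D₀ u = x := by
    simp only [u, hval, smul_smul, mul_inv_cancel₀ hε, one_smul, add_sub_cancel]
  calc R (Mc x) = R (Mc u + ε • Mc (D₀ u)) := by
        rw [← hx, map_add, ContinuousLinearMap.map_smul_of_tower]
    _ = R ((Mc u + ε • D₀ ⟨Mc u, hMdom u u.2⟩) + ε • Mop u) := by
        rw [hMcomm, smul_add, add_assoc]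
    _ = Mc (R x) + ε • R (Mop (R x)) := by
        rw [map_add, hinv ⟨Mc u, hMdom u u.2⟩, ContinuousLinearMap.map_smul_of_tower]

variable [CompleteSpace K]

theorem adjoint_resolvent_commutator (D₀ : K →ₗ.[ℂ] K) (Mc Mop R : K →L[ℂ] K) {ε : ℝ}
    (hε : ε ≠ 0) (hMdom : ∀ u ∈ D₀.domain, Mc u ∈ D₀.domain)
    (hMcomm : ∀ u : D₀.domain, Mc (D₀ u) = D₀ ⟨Mc u, hMdom u u.2⟩ + Mop u)
    (hdom : ∀ x, R x ∈ D₀.domain) (hval : ∀ x, D₀ ⟨R x, hdom x⟩ = ε⁻¹ • (x - R x))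
    (hinv : ∀ u : D₀.domain, R ((u : K) + ε • D₀ u) = u) (f : K) :
    adjoint Mc (adjoint R f) =
      adjoint R (adjoint Mc f) + ε • adjoint R (adjoint Mop (adjoint R f)) := by
  refine ext_inner_right ℂ fun x => ?_
  simp only [inner_add_left, inner_smul_left_eq_smul, adjoint_inner_left,
    resolvent_commutator D₀ Mc Mop R hε hMdom hMcomm hdom hval hinv, inner_add_right,
    inner_smul_right_eq_smul]

theorem exists_adjoint_apply_adjoint_resolvent (D₀ A : K →ₗ.[ℂ] K) (Mc N Mop R : K →L[ℂ] K)
    {ε : ℝ} (hMdom : ∀ u ∈ D₀.domain, Mc u ∈ D₀.domain)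
    (hMcomm : ∀ u : D₀.domain, Mc (D₀ u) = D₀ ⟨Mc u, hMdom u u.2⟩ + Mop u)
    (hdom : ∀ x, R x ∈ D₀.domain) (hval : ∀ x, D₀ ⟨R x, hdom x⟩ = ε⁻¹ • (x - R x))
    (hARdom : ∀ u ∈ A.domain, R u ∈ A.domain)
    (hARcomm : ∀ u : A.domain, A ⟨R u, hARdom u u.2⟩ = R (A u))
    (hAdense : Dense (A.domain : Set K))
    (hB0dense : Dense ((D₀.domain ⊓ A.domain : Submodule ℂ K) : Set K))
    (f : K) (hf : f ∈ (B0 D₀ A Mc N hMdom).adjoint.domain) :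
    ∃ h : adjoint R f ∈ A.adjoint.domain, A.adjoint ⟨adjoint R f, h⟩ =
      adjoint R ((B0 D₀ A Mc N hMdom).adjoint ⟨f, hf⟩ + adjoint Mop f - adjoint N f)
        - ε⁻¹ • (adjoint Mc f - adjoint R (adjoint Mc f)) := by
  set g := (B0 D₀ A Mc N hMdom).adjoint ⟨f, hf⟩
  have hw : ∀ v : A.domain,
      ⟪adjoint R (g + adjoint Mop f - adjoint N f)
        - ε⁻¹ • (adjoint Mc f - adjoint R (adjoint Mc f)), (v : K)⟫_ℂ = ⟪adjoint R f, A v⟫_ℂ := by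
    intro v
    have hu : R v ∈ D₀.domain ⊓ A.domain := ⟨hdom v, hARdom v v.2⟩
    have hB : B0 D₀ A Mc N hMdom ⟨R v, hu⟩
        = Mc (ε⁻¹ • (v - R v)) - Mop (R v) + N (R v) + R (A v) := by
      change D₀ ⟨Mc (R v), _⟩ + N (R v) + A ⟨R v, hARdom v v.2⟩ = _
      rw [hARcomm v, ← hval v, hMcomm ⟨R v, hdom v⟩]
      abel
    have hformal : ⟪g, R v⟫_ℂ = ⟪f, B0 D₀ A Mc N hMdom ⟨R v, hu⟩⟫_ℂ :=
      LinearPMap.adjoint_isFormalAdjoint hB0dense ⟨f, hf⟩ ⟨R v, hu⟩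
    rw [hB] at hformal
    simp only [ContinuousLinearMap.map_smul_of_tower, map_sub, inner_add_right,
      inner_sub_right, inner_smul_right_eq_smul] at hformal
    simp only [inner_sub_left, inner_add_left, inner_smul_left_eq_smul, adjoint_inner_left,
      hformal]
    abel
  exact ⟨LinearPMap.mem_adjoint_domain_of_exists _ ⟨_, hw⟩,
    LinearPMap.adjoint_apply_eq hAdense _ hw⟩

theorem coercive_adjoint_resolvent (D₀ A : K →ₗ.[ℂ] K) (Mc N Mop R : K →L[ℂ] K)
    {ε : ℝ} (hε : ε ≠ 0) (hMdom : ∀ u ∈ D₀.domain, Mc u ∈ D₀.domain)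
    (hMcomm : ∀ u : D₀.domain, Mc (D₀ u) = D₀ ⟨Mc u, hMdom u u.2⟩ + Mop u)
    (hdom : ∀ x, R x ∈ D₀.domain) (hval : ∀ x, D₀ ⟨R x, hdom x⟩ = ε⁻¹ • (x - R x))
    (hinv : ∀ u : D₀.domain, R ((u : K) + ε • D₀ u) = u)
    (hadjdom : ∀ x, adjoint R x ∈ D₀.adjoint.domain)
    (hadjval : ∀ x, D₀.adjoint ⟨adjoint R x, hadjdom x⟩ = ε⁻¹ • (x - adjoint R x))
    (hARdom : ∀ u ∈ A.domain, R u ∈ A.domain)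
    (hARcomm : ∀ u : A.domain, A ⟨R u, hARdom u u.2⟩ = R (A u))
    (hAdense : Dense (A.domain : Set K))
    (hB0dense : Dense ((D₀.domain ⊓ A.domain : Submodule ℂ K) : Set K)) {c : ℝ}
    (hposadj : ∀ (ψ : K) (hψd : ψ ∈ D₀.adjoint.domain) (hψa : ψ ∈ A.adjoint.domain),
      c * ‖ψ‖ ^ 2 ≤ (⟪adjoint Mc (D₀.adjoint ⟨ψ, hψd⟩) + adjoint N ψ + A.adjoint ⟨ψ, hψa⟩,
        ψ⟫_ℂ).re)
    (f : K) (hf : f ∈ (B0 D₀ A Mc N hMdom).adjoint.domain) :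
    c * ‖adjoint R f‖ ^ 2 ≤
      (⟪adjoint R ((B0 D₀ A Mc N hMdom).adjoint ⟨f, hf⟩ + adjoint Mop f - adjoint N f)
        + adjoint N (adjoint R f) - adjoint R (adjoint Mop (adjoint R f)), adjoint R f⟫_ℂ).re := by
  obtain ⟨hψ, hAψ⟩ := exists_adjoint_apply_adjoint_resolvent D₀ A Mc N Mop R hMdom hMcomm hdom
    hval hARdom hARcomm hAdense hB0dense f hf
  convert hposadj _ (hadjdom f) hψ using 4
  rw [hAψ, hadjval, ContinuousLinearMap.map_smul_of_tower, map_sub (adjoint Mc),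
    adjoint_resolvent_commutator D₀ Mc Mop R hε hMdom hMcomm hdom hval hinv]
  simp only [smul_sub, smul_add, smul_smul, inv_mul_cancel₀ hε, one_smul]
  abel

end

theorem stmt15_general
    {K : Type*} [NormedAddCommGroup K] [InnerProductSpace ℂ K] [CompleteSpace K]
    (D₀ : K →ₗ.[ℂ] K)
    (R : ℝ → K →L[ℂ] K)
    (hRdom : ∀ ε, 0 < ε → ∀ x : K, R ε x ∈ D₀.domain)
    (hRval : ∀ ε (hε : 0 < ε) (x : K),
      D₀ ⟨R ε x, hRdom ε hε x⟩ = ε⁻¹ • (x - R ε x))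
    (hRinv : ∀ ε, 0 < ε → ∀ u : D₀.domain, R ε ((u : K) + ε • D₀ u) = u)
    (hRnorm : ∀ ε, 0 < ε → ‖R ε‖ ≤ 1)
    (hRadjdom : ∀ ε, 0 < ε → ∀ x : K,
      ContinuousLinearMap.adjoint (R ε) x ∈ D₀.adjoint.domain)
    (hRadjval : ∀ ε (hε : 0 < ε) (x : K),
      D₀.adjoint ⟨ContinuousLinearMap.adjoint (R ε) x, hRadjdom ε hε x⟩
        = ε⁻¹ • (x - ContinuousLinearMap.adjoint (R ε) x))
    (hRadjtendsto : ∀ x : K,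
      Tendsto (fun ε => ContinuousLinearMap.adjoint (R ε) x) (nhdsWithin 0 (Set.Ioi 0)) (nhds x))
    (Mc N Mop : K →L[ℂ] K)
    (hMdom : ∀ u ∈ D₀.domain, Mc u ∈ D₀.domain)
    (hMcomm : ∀ u : D₀.domain, Mc (D₀ u) = D₀ ⟨Mc u, hMdom u u.2⟩ + Mop u)
    (A : K →ₗ.[ℂ] K) (hAdense : Dense (A.domain : Set K))
    (hARdom : ∀ ε, 0 < ε → ∀ u ∈ A.domain, R ε u ∈ A.domain)
    (hARcomm : ∀ ε (hε : 0 < ε) (u : A.domain),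
      A ⟨R ε u, hARdom ε hε u u.2⟩ = R ε (A u))
    (hB0dense : Dense ((D₀.domain ⊓ A.domain : Submodule ℂ K) : Set K))
    (c : ℝ) (hc : 0 < c)
    (hposadj : ∀ (ψ : K) (hψd : ψ ∈ D₀.adjoint.domain) (hψa : ψ ∈ A.adjoint.domain),
      c * ‖ψ‖ ^ 2 ≤ (inner ℂ (ContinuousLinearMap.adjoint Mc (D₀.adjoint ⟨ψ, hψd⟩)
          + ContinuousLinearMap.adjoint N ψ + A.adjoint ⟨ψ, hψa⟩) ψ : ℂ).re) :
    (∀ (f : K) (hf : f ∈ (B0 D₀ A Mc N hMdom).adjoint.domain),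
      c * ‖f‖ ^ 2 ≤ (inner ℂ ((B0 D₀ A Mc N hMdom).adjoint ⟨f, hf⟩) f : ℂ).re) ∧
    Function.Injective (fun f : (B0 D₀ A Mc N hMdom).adjoint.domain =>
      (B0 D₀ A Mc N hMdom).adjoint f) := by
  have hcoercive : ∀ (f : K) (hf : f ∈ (B0 D₀ A Mc N hMdom).adjoint.domain),
      c * ‖f‖ ^ 2 ≤ (⟪(B0 D₀ A Mc N hMdom).adjoint ⟨f, hf⟩, f⟫_ℂ).re := by
    intro f hf
    have hψ := hRadjtendsto f
    have hbound : ∀ᶠ ε in 𝓝[>] 0, ‖adjoint (R ε)‖ ≤ 1 := by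
      filter_upwards [self_mem_nhdsWithin] with ε hε
      rw [LinearIsometryEquiv.norm_map]
      exact hRnorm ε hε
    have hS := tendsto_apply_add_sub_of_tendsto_id hbound hRadjtendsto (adjoint N) (adjoint Mop) f
      ((B0 D₀ A Mc N hMdom).adjoint ⟨f, hf⟩)
    refine le_of_tendsto_of_tendsto ((hψ.norm.pow 2).const_mul c)
      ((Complex.continuous_re.tendsto _).comp (hS.inner hψ)) ?_
    filter_upwards [self_mem_nhdsWithin] with ε hε
    exact coercive_adjoint_resolvent D₀ A Mc N Mop (R ε) hε.ne' hMdom hMcomm (hRdom ε hε)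
      (hRval ε hε) (hRinv ε hε) (hRadjdom ε hε) (hRadjval ε hε) (hARdom ε hε) (hARcomm ε hε)
      hAdense hB0dense hposadj f hf
  exact ⟨hcoercive, LinearPMap.injective_of_coercive _ hc hcoercive⟩

theorem stmt15
    {K : Type*} [NormedAddCommGroup K] [InnerProductSpace ℂ K] [CompleteSpace K]
    (D₀ : K →ₗ.[ℂ] K) (hD₀dense : Dense (D₀.domain : Set K)) (hD₀closed : D₀.IsClosed)
    (R : ℝ → K →L[ℂ] K)
    (hRdom : ∀ ε, 0 < ε → ∀ x : K, R ε x ∈ D₀.domain)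
    (hRval : ∀ ε (hε : 0 < ε) (x : K),
      D₀ ⟨R ε x, hRdom ε hε x⟩ = ε⁻¹ • (x - R ε x))
    (hRinv : ∀ ε, 0 < ε → ∀ u : D₀.domain, R ε ((u : K) + ε • D₀ u) = u)
    (hRnorm : ∀ ε, 0 < ε → ‖R ε‖ ≤ 1)
    (hRtendsto : ∀ x : K, Tendsto (fun ε => R ε x) (nhdsWithin 0 (Set.Ioi 0)) (nhds x))
    (hRadjdom : ∀ ε, 0 < ε → ∀ x : K,
      ContinuousLinearMap.adjoint (R ε) x ∈ D₀.adjoint.domain)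
    (hRadjval : ∀ ε (hε : 0 < ε) (x : K),
      D₀.adjoint ⟨ContinuousLinearMap.adjoint (R ε) x, hRadjdom ε hε x⟩
        = ε⁻¹ • (x - ContinuousLinearMap.adjoint (R ε) x))
    (hRadjtendsto : ∀ x : K,
      Tendsto (fun ε => ContinuousLinearMap.adjoint (R ε) x) (nhdsWithin 0 (Set.Ioi 0)) (nhds x))
    (Mc N Mop : K →L[ℂ] K)
    (hMdom : ∀ u ∈ D₀.domain, Mc u ∈ D₀.domain)
    (hMcomm : ∀ u : D₀.domain, Mc (D₀ u) = D₀ ⟨Mc u, hMdom u u.2⟩ + Mop u)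
    (A : K →ₗ.[ℂ] K) (hAdense : Dense (A.domain : Set K)) (hAclosed : A.IsClosed)
    (hARdom : ∀ ε, 0 < ε → ∀ u ∈ A.domain, R ε u ∈ A.domain)
    (hARcomm : ∀ ε (hε : 0 < ε) (u : A.domain),
      A ⟨R ε u, hARdom ε hε u u.2⟩ = R ε (A u))
    (hB0dense : Dense ((D₀.domain ⊓ A.domain : Submodule ℂ K) : Set K))
    (c : ℝ) (hc : 0 < c)
    (hpos : ∀ (φ : K) (hφ : φ ∈ D₀.domain ⊓ A.domain),
      c * ‖φ‖ ^ 2 ≤ (inner ℂ (B0 D₀ A Mc N hMdom ⟨φ, hφ⟩) φ : ℂ).re)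
    (hposadj : ∀ (ψ : K) (hψd : ψ ∈ D₀.adjoint.domain) (hψa : ψ ∈ A.adjoint.domain),
      c * ‖ψ‖ ^ 2 ≤ (inner ℂ (ContinuousLinearMap.adjoint Mc (D₀.adjoint ⟨ψ, hψd⟩)
          + ContinuousLinearMap.adjoint N ψ + A.adjoint ⟨ψ, hψa⟩) ψ : ℂ).re) :
    (∀ (f : K) (hf : f ∈ (B0 D₀ A Mc N hMdom).adjoint.domain),
      c * ‖f‖ ^ 2 ≤ (inner ℂ ((B0 D₀ A Mc N hMdom).adjoint ⟨f, hf⟩) f : ℂ).re) ∧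
    Function.Injective (fun f : (B0 D₀ A Mc N hMdom).adjoint.domain =>
      (B0 D₀ A Mc N hMdom).adjoint f) :=
  stmt15_general D₀ R hRdom hRval hRinv hRnorm hRadjdom hRadjval hRadjtendsto Mc N Mop hMdom hMcomm
    A hAdense hARdom hARcomm hB0dense c hc hposadj
end

section
/- Let H be a complex Hilbert space, ν > 0, and let g : ℝ → H be a measurable function with ∫_ℝ ‖g(t)‖² exp(−2νt) dt < ∞. Then for every t ∈ ℝ the function g is Bochner integrable on (−∞, t], and the function G : ℝ → H, G(t) := ∫_{(−∞,t]} g(τ) dτ, satisfies ∫_ℝ ‖G(t)‖² exp(−2νt) dt ≤ (1/ν²) ∫_ℝ ‖g(t)‖² exp(−2νt) dt. -/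
open MeasureTheory
open scoped ENNReal NNReal

open Set Real ProbabilityTheory Function

/-!
With `f τ = ‖g τ‖ e^{-ντ}` one has `‖f‖₂² = ∫ ‖g‖² e^{-2νt}` and
`ν e^{-νt} ∫_{-∞}^t ‖g‖ = ∫ p(t - τ) f(τ) dτ`, where `p` is the density of the exponential
distribution with rate `ν`. Convolution with a probability density is a contraction of `L²`
(Schur test: Cauchy–Schwarz against the kernel, then Tonelli), which gives the bound after
dividing by `ν²`. The same Cauchy–Schwarz step, with `p ≤ ν`, shows that `‖g‖` is integrable on
every half line.
-/

section SchurTest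

variable {α β : Type*} [MeasurableSpace α] [MeasurableSpace β] {μ : Measure α} {ν : Measure β}

theorem ENNReal.sq_lintegral_mul_le {k f : β → ℝ≥0∞} (hk : AEMeasurable k ν)
    (hf : AEMeasurable f ν) :
    (∫⁻ y, k y * f y ∂ν) ^ 2 ≤ (∫⁻ y, k y ∂ν) * ∫⁻ y, k y * f y ^ 2 ∂ν := by
  have hsqrt : ∀ y, k y * f y = k y ^ (1 / 2 : ℝ) * (k y * f y ^ 2) ^ (1 / 2 : ℝ) := fun y => by
    rw [← ENNReal.mul_rpow_of_nonneg _ _ (by norm_num), ← mul_assoc, ← pow_two,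
      ← mul_pow, ← ENNReal.rpow_natCast, ← ENNReal.rpow_mul]
    norm_num
  have holder := ENNReal.lintegral_mul_norm_pow_le (g := fun y => k y * f y ^ 2) hk (by fun_prop)
    (p := 1 / 2) (q := 1 / 2) (by norm_num) (by norm_num) (by norm_num)
  rw [← lintegral_congr hsqrt] at holder
  calc (∫⁻ y, k y * f y ∂ν) ^ 2
      ≤ ((∫⁻ y, k y ∂ν) ^ (1 / 2 : ℝ) * (∫⁻ y, k y * f y ^ 2 ∂ν) ^ (1 / 2 : ℝ)) ^ 2 := by
        gcongr
    _ = (∫⁻ y, k y ∂ν) * ∫⁻ y, k y * f y ^ 2 ∂ν := by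
        rw [mul_pow, ← ENNReal.rpow_natCast, ← ENNReal.rpow_natCast, ← ENNReal.rpow_mul,
          ← ENNReal.rpow_mul]
        norm_num

theorem lintegral_sq_lintegral_mul_le [SFinite μ] [SFinite ν] {k : α → β → ℝ≥0∞}
    (hk : Measurable (uncurry k)) {f : β → ℝ≥0∞} (hf : AEMeasurable f ν) {A B : ℝ≥0∞}
    (hA : ∀ x, ∫⁻ y, k x y ∂ν ≤ A) (hB : ∀ y, ∫⁻ x, k x y ∂μ ≤ B) :
    ∫⁻ x, (∫⁻ y, k x y * f y ∂ν) ^ 2 ∂μ ≤ A * B * ∫⁻ y, f y ^ 2 ∂ν :=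
  calc ∫⁻ x, (∫⁻ y, k x y * f y ∂ν) ^ 2 ∂μ
      ≤ ∫⁻ x, A * ∫⁻ y, k x y * f y ^ 2 ∂ν ∂μ := lintegral_mono fun x =>
        (ENNReal.sq_lintegral_mul_le hk.of_uncurry_left.aemeasurable hf).trans
          (by gcongr; exact hA x)
    _ = A * ∫⁻ y, (∫⁻ x, k x y ∂μ) * f y ^ 2 ∂ν := by
        have hprod : AEMeasurable (uncurry fun x y => k x y * f y ^ 2) (μ.prod ν) :=
          hk.aemeasurable.mul (hf.pow_const 2).comp_snd
        rw [lintegral_const_mul'' _ hprod.lintegral_prod_right, lintegral_lintegral_swap hprod]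
        simp_rw [lintegral_mul_const'' _ hk.of_uncurry_right.aemeasurable]
    _ ≤ A * ∫⁻ y, B * f y ^ 2 ∂ν := by gcongr with y; exact hB y
    _ = A * B * ∫⁻ y, f y ^ 2 ∂ν := by rw [lintegral_const_mul'' _ (hf.pow_const 2), mul_assoc]

end SchurTest

section ExponentialKernel

variable {r : ℝ}

theorem exponentialPDF_le (hr : 0 ≤ r) (x : ℝ) : exponentialPDF r x ≤ ENNReal.ofReal r := by
  rcases le_or_gt 0 x with hx | hx
  · rw [exponentialPDF_of_nonneg hx]
    gcongr
    exact mul_le_of_le_one_right hr (exp_le_one_iff.2 (by nlinarith))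
  · simp [exponentialPDF_of_neg hx]

theorem measurable_exponentialPDF_sub (r : ℝ) :
    Measurable (uncurry fun t τ : ℝ => exponentialPDF r (t - τ)) :=
  (ENNReal.measurable_ofReal.comp (measurable_exponentialPDFReal r)).comp
    (measurable_fst.sub measurable_snd)

theorem lintegral_exponentialPDF_sub_left (hr : 0 < r) (t : ℝ) :
    ∫⁻ τ, exponentialPDF r (t - τ) = 1 := by
  rw [lintegral_sub_left_eq_self (exponentialPDF r), lintegral_exponentialPDF_eq_one hr]

theorem lintegral_exponentialPDF_sub_right (hr : 0 < r) (τ : ℝ) :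
    ∫⁻ t, exponentialPDF r (t - τ) = 1 := by
  rw [lintegral_sub_right_eq_self (exponentialPDF r), lintegral_exponentialPDF_eq_one hr]

theorem lintegral_exponentialPDF_sub_mul (r t : ℝ) (u : ℝ → ℝ≥0∞) :
    ∫⁻ τ, exponentialPDF r (t - τ) * (u τ * ENNReal.ofReal (exp (-(r * τ)))) =
      ENNReal.ofReal (r * exp (-(r * t))) * ∫⁻ τ in Iic t, u τ := by
  rw [← lintegral_const_mul' _ _ ENNReal.ofReal_ne_top, ← lintegral_indicator measurableSet_Iic]
  refine lintegral_congr fun τ => ?_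
  rcases le_or_gt τ t with hτ | hτ
  · rw [exponentialPDF_of_nonneg (sub_nonneg.2 hτ), indicator_of_mem (mem_Iic.2 hτ),
      mul_comm (u τ), ← mul_assoc, ← ENNReal.ofReal_mul' (exp_pos _).le]
    congr 2
    rw [mul_assoc, ← exp_add]
    ring_nf
  · have hτ' : τ ∉ Iic t := not_le.2 hτ
    simp [exponentialPDF_of_neg (sub_neg.2 hτ), indicator_of_notMem hτ']

end ExponentialKernel

section WeightedHardy

variable {r : ℝ} {u : ℝ → ℝ≥0∞}

theorem mul_ofReal_exp_neg_sq (a : ℝ≥0∞) (r t : ℝ) :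
    (a * ENNReal.ofReal (exp (-(r * t)))) ^ 2 = a ^ 2 * ENNReal.ofReal (exp (-2 * r * t)) := by
  rw [mul_pow, ← ENNReal.ofReal_pow (exp_pos _).le, ← exp_nat_mul]
  ring_nf

theorem setLIntegral_Iic_lt_top_of_lintegral_sq_mul_exp_lt_top (hr : 0 < r)
    (hu : AEMeasurable u) (hfin : ∫⁻ τ, u τ ^ 2 * ENNReal.ofReal (exp (-2 * r * τ)) < ⊤)
    (t : ℝ) : ∫⁻ τ in Iic t, u τ < ⊤ := by
  set f : ℝ → ℝ≥0∞ := fun τ => u τ * ENNReal.ofReal (exp (-(r * τ)))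
  have hsq : (∫⁻ τ, exponentialPDF r (t - τ) * f τ) ^ 2 < ⊤ := calc
    (∫⁻ τ, exponentialPDF r (t - τ) * f τ) ^ 2
        ≤ (∫⁻ τ, exponentialPDF r (t - τ)) * ∫⁻ τ, exponentialPDF r (t - τ) * f τ ^ 2 :=
      ENNReal.sq_lintegral_mul_le (measurable_exponentialPDF_sub r).of_uncurry_left.aemeasurable
        (hu.mul (by fun_prop))
    _ ≤ 1 * ∫⁻ τ, ENNReal.ofReal r * f τ ^ 2 := by
      gcongr with τ
      · exact (lintegral_exponentialPDF_sub_left hr t).le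
      · exact exponentialPDF_le hr.le _
    _ < ⊤ := by
      simp_rw [f, mul_ofReal_exp_neg_sq]
      rw [one_mul, lintegral_const_mul' _ _ ENNReal.ofReal_ne_top]
      exact ENNReal.mul_lt_top ENNReal.ofReal_lt_top hfin
  rw [lintegral_exponentialPDF_sub_mul, ENNReal.pow_lt_top_iff] at hsq
  exact ENNReal.lt_top_of_mul_ne_top_right (hsq.resolve_right two_ne_zero).ne
    (ENNReal.ofReal_pos.2 (by positivity)).ne'

theorem lintegral_sq_setLIntegral_Iic_mul_exp_le (hr : 0 < r) (hu : AEMeasurable u) :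
    ∫⁻ t, (∫⁻ τ in Iic t, u τ) ^ 2 * ENNReal.ofReal (exp (-2 * r * t)) ≤
      ENNReal.ofReal (1 / r ^ 2) * ∫⁻ t, u t ^ 2 * ENNReal.ofReal (exp (-2 * r * t)) := by
  set f : ℝ → ℝ≥0∞ := fun τ => u τ * ENNReal.ofReal (exp (-(r * τ)))
  have hweight (t : ℝ) : (∫⁻ τ in Iic t, u τ) ^ 2 * ENNReal.ofReal (exp (-2 * r * t)) =
      ENNReal.ofReal (1 / r ^ 2) * (∫⁻ τ, exponentialPDF r (t - τ) * f τ) ^ 2 := by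
    rw [lintegral_exponentialPDF_sub_mul, mul_pow, ← mul_assoc, mul_comm]
    congr 1
    rw [← ENNReal.ofReal_pow (by positivity), ← ENNReal.ofReal_mul (by positivity), mul_pow,
      ← exp_nat_mul]
    field_simp
    ring_nf
  calc ∫⁻ t, (∫⁻ τ in Iic t, u τ) ^ 2 * ENNReal.ofReal (exp (-2 * r * t))
      = ENNReal.ofReal (1 / r ^ 2) * ∫⁻ t, (∫⁻ τ, exponentialPDF r (t - τ) * f τ) ^ 2 := by
        simp_rw [hweight]
        exact lintegral_const_mul' _ _ ENNReal.ofReal_ne_top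
    _ ≤ ENNReal.ofReal (1 / r ^ 2) * (1 * 1 * ∫⁻ τ, f τ ^ 2) := by
        gcongr
        exact lintegral_sq_lintegral_mul_le (measurable_exponentialPDF_sub r) (hu.mul (by fun_prop))
          (fun t => (lintegral_exponentialPDF_sub_left hr t).le)
          (fun τ => (lintegral_exponentialPDF_sub_right hr τ).le)
    _ = ENNReal.ofReal (1 / r ^ 2) * ∫⁻ t, u t ^ 2 * ENNReal.ofReal (exp (-2 * r * t)) := by
        simp_rw [f, one_mul, mul_ofReal_exp_neg_sq]

end WeightedHardy

theorem stmt17_general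
    {H : Type*} [NormedAddCommGroup H] [InnerProductSpace ℂ H]
    (ν : ℝ) (hν : 0 < ν) (g : ℝ → H) (hg : AEStronglyMeasurable g volume)
    (hint : ∫⁻ t : ℝ, (‖g t‖₊ : ℝ≥0∞) ^ 2 * ENNReal.ofReal (Real.exp (-2 * ν * t)) < ⊤) :
    (∀ t : ℝ, IntegrableOn g (Set.Iic t) volume) ∧
    ∫⁻ t : ℝ, (‖∫ τ in Set.Iic t, g τ‖₊ : ℝ≥0∞) ^ 2 * ENNReal.ofReal (Real.exp (-2 * ν * t))
      ≤ ENNReal.ofReal (1 / ν ^ 2) *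
        ∫⁻ t : ℝ, (‖g t‖₊ : ℝ≥0∞) ^ 2 * ENNReal.ofReal (Real.exp (-2 * ν * t)) := by
  simp only [← enorm_eq_nnnorm] at hint ⊢
  refine ⟨fun t => ⟨hg.restrict,
    setLIntegral_Iic_lt_top_of_lintegral_sq_mul_exp_lt_top hν hg.enorm hint t⟩, ?_⟩
  calc ∫⁻ t, ‖∫ τ in Iic t, g τ‖ₑ ^ 2 * ENNReal.ofReal (exp (-2 * ν * t))
      ≤ ∫⁻ t, (∫⁻ τ in Iic t, ‖g τ‖ₑ) ^ 2 * ENNReal.ofReal (exp (-2 * ν * t)) :=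
        lintegral_mono fun t => by gcongr; exact enorm_integral_le_lintegral_enorm g
    _ ≤ _ := lintegral_sq_setLIntegral_Iic_mul_exp_le hν hg.enorm

/-- For `g ∈ L²_ν(ℝ;H)` (with weight `exp(-2νt)`), `g` is Bochner
integrable on every half line `(-∞, t]`, and the time integral
`G(t) = ∫_{-∞}^t g(τ) dτ` satisfies the weighted bound
`∫ ‖G(t)‖² exp(-2νt) dt ≤ ν⁻² ∫ ‖g(t)‖² exp(-2νt) dt`. -/
theorem stmt17
    {H : Type*} [NormedAddCommGroup H] [InnerProductSpace ℂ H] [CompleteSpace H]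
    (ν : ℝ) (hν : 0 < ν) (g : ℝ → H) (hg : AEStronglyMeasurable g volume)
    (hint : ∫⁻ t : ℝ, (‖g t‖₊ : ℝ≥0∞) ^ 2 * ENNReal.ofReal (Real.exp (-2 * ν * t)) < ⊤) :
    (∀ t : ℝ, IntegrableOn g (Set.Iic t) volume) ∧
    ∫⁻ t : ℝ, (‖∫ τ in Set.Iic t, g τ‖₊ : ℝ≥0∞) ^ 2 * ENNReal.ofReal (Real.exp (-2 * ν * t))
      ≤ ENNReal.ofReal (1 / ν ^ 2) *
        ∫⁻ t : ℝ, (‖g t‖₊ : ℝ≥0∞) ^ 2 * ENNReal.ofReal (Real.exp (-2 * ν * t)) :=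
  stmt17_general ν hν g hg hint
end
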